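/- Let T be a tree and T_i obtained from T by any of the four operations O_1–O_4 (as in the paper). Then γ_t(T) - τ(T) = γ_t(T_i) - τ(T_i); in particular γ_t(T) = τ(T) if and only if γ_t(T_i) = τ(T_i). -/

import Mathlib

open SimpleGraph

/-- `D` is a total dominating set of `G`: every vertex has a neighbor in `D`. -/
def IsTotalDomSet {V : Type*} (G : SimpleGraph V) (D : Finset V) : Prop :=
  ∀ v : V, ∃ u ∈ D, G.Adj v u

/-- `X` is a vertex cover of `G`: every edge has an endpoint in `X`. -/
def IsVertexCover {V : Type*} (G : SimpleGraph V) (X : Finset V) : Prop :=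
  ∀ ⦃a b : V⦄, G.Adj a b → a ∈ X ∨ b ∈ X

/-- The total domination number `γ_t(G)`. -/
noncomputable def gammaT {V : Type*} (G : SimpleGraph V) : ℕ :=
  sInf {n | ∃ D : Finset V, IsTotalDomSet G D ∧ D.card = n}

/-- The vertex cover number `τ(G)`. -/
noncomputable def tau {V : Type*} (G : SimpleGraph V) : ℕ :=
  sInf {n | ∃ X : Finset V, _root_.IsVertexCover G X ∧ X.card = n}

/-- A `(γ_t-τ)`-set: simultaneously a minimum total dominating set and a
minimum vertex cover. -/
def IsGttSet {V : Type*} (G : SimpleGraph V) (D : Finset V) : Prop :=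
  IsTotalDomSet G D ∧ _root_.IsVertexCover G D ∧ D.card = gammaT G ∧ D.card = tau G

/-- The sum `G +_{uv} H`: the disjoint union of `G` and `H` with the extra edge `uv`. -/
def graphSum {α β : Type*} (G : SimpleGraph α) (H : SimpleGraph β) (u : α) (v : β) :
    SimpleGraph (α ⊕ β) :=
  SimpleGraph.fromRel (fun x y =>
    (∃ a b, x = Sum.inl a ∧ y = Sum.inl b ∧ G.Adj a b) ∨
    (∃ a b, x = Sum.inr a ∧ y = Sum.inr b ∧ H.Adj a b) ∨
    (x = Sum.inl u ∧ y = Sum.inr v))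

/-- The private neighborhood `pn(u,S) = {w : N(w) ∩ S = {u}}`. -/
def pn {V : Type*} (G : SimpleGraph V) (S : Finset V) (u : V) : Set V :=
  {w | G.neighborSet w ∩ ↑S = {u}}

/-- `v` is quasi-isolated: for some minimum total dominating set `S` there is
`u ∈ S` with `pn(u,S) = {v}`. -/
def QuasiIsolated {V : Type*} (G : SimpleGraph V) (v : V) : Prop :=
  ∃ S : Finset V, IsTotalDomSet G S ∧ S.card = gammaT G ∧ ∃ u ∈ S, pn G S u = {v}

/-- An end vertex: a vertex of degree 1. -/
def IsEndVertex {V : Type*} (G : SimpleGraph V) (v : V) : Prop :=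
  (G.neighborSet v).ncard = 1

/-- `T'` has the same difference `γ_t - τ` as `T` (and the same equality `γ_t = τ`). -/
def PreservesGtTau {V W : Type*} (T : SimpleGraph V) (T' : SimpleGraph W) : Prop :=
  ((gammaT T' : ℤ) - (tau T' : ℤ) = (gammaT T : ℤ) - (tau T : ℤ)) ∧
  (gammaT T = tau T ↔ gammaT T' = tau T')

/-!
Restricted to the two sides, a vertex cover of `T +_{uv} H` covers `T` and `H`, and a total
dominating set dominates `T` and every vertex of `H` other than `v`, except that `u` may have lost
its only dominator `v`; adding one neighbour of `u` repairs this. Counting on the attached path then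
shows that `O_1`–`O_4` raise `γ_t` and `τ` by the same amount (`2`, `0`, `1`, `2`). In `O_3` and
`O_4` a minimum set never needs the repair: a repaired set of size `γ_t(T)` would make `u` the
unique private neighbour of the added vertex, i.e. `u` quasi-isolated.

Since `γ_t` and `τ` are infima over finite sets, they are `0` when no finite such set exists; for
`O_4` this is handled using that in a tree a finite total dominating set yields a finite vertex
cover.
-/

open Finset Sum

section Parameters
variable {V : Type*} {G : SimpleGraph V} {D X : Finset V} {n : ℕ}

lemma gammaT_le_card (hD : IsTotalDomSet G D) : gammaT G ≤ #D :=
  Nat.sInf_le ⟨D, hD, rfl⟩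

lemma le_gammaT (hD : IsTotalDomSet G D) (h : ∀ D', IsTotalDomSet G D' → n ≤ #D') :
    n ≤ gammaT G :=
  le_csInf ⟨_, D, hD, rfl⟩ (by rintro _ ⟨D', hD', rfl⟩; exact h D' hD')

lemma exists_isTotalDomSet_card_eq_gammaT (hD : IsTotalDomSet G D) :
    ∃ D', IsTotalDomSet G D' ∧ #D' = gammaT G :=
  Nat.sInf_mem (s := {n | ∃ D', IsTotalDomSet G D' ∧ #D' = n}) ⟨_, D, hD, rfl⟩

lemma gammaT_eq_zero_of_forall_not (h : ∀ D, ¬ IsTotalDomSet G D) : gammaT G = 0 := by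
  simp [gammaT, h]

lemma tau_le_card (hX : _root_.IsVertexCover G X) : tau G ≤ #X :=
  Nat.sInf_le ⟨X, hX, rfl⟩

lemma le_tau (hX : _root_.IsVertexCover G X) (h : ∀ X', _root_.IsVertexCover G X' → n ≤ #X') :
    n ≤ tau G :=
  le_csInf ⟨_, X, hX, rfl⟩ (by rintro _ ⟨X', hX', rfl⟩; exact h X' hX')

lemma exists_isVertexCover_card_eq_tau (hX : _root_.IsVertexCover G X) :
    ∃ X', _root_.IsVertexCover G X' ∧ #X' = tau G :=
  Nat.sInf_mem (s := {n | ∃ X', _root_.IsVertexCover G X' ∧ #X' = n}) ⟨_, X, hX, rfl⟩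

lemma tau_eq_zero_of_forall_not (h : ∀ X, ¬ _root_.IsVertexCover G X) : tau G = 0 := by
  simp [tau, h]

lemma exists_isTotalDomSet_of_isVertexCover (hG : ∀ v, ∃ w, G.Adj v w)
    (hX : _root_.IsVertexCover G X) : ∃ D : Finset V, IsTotalDomSet G D := by
  classical
  choose f hf using hG
  refine ⟨X ∪ X.image f, fun v => ?_⟩
  rcases hX (hf v) with hv | hv
  · exact ⟨f v, mem_union_right _ (mem_image_of_mem f hv), hf v⟩
  · exact ⟨f v, mem_union_left _ hv, hf v⟩

end Parameters

lemma preservesGtTau_of_eq_add {V W : Type*} {T : SimpleGraph V} {T' : SimpleGraph W} (k : ℕ)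
    (hγ : gammaT T' = gammaT T + k) (hτ : tau T' = tau T + k) : PreservesGtTau T T' := by
  refine ⟨?_, ?_⟩ <;> rw [hγ, hτ] <;> omega

section Acyclic
variable {V : Type*} {G : SimpleGraph V}

lemma SimpleGraph.IsAcyclic.not_adj_of_adj_of_adj (hG : G.IsAcyclic) {a b c : V}
    (hab : G.Adj a b) (hbc : G.Adj b c) : ¬ G.Adj a c := by
  intro hac
  have hp : (Walk.cons hbc (Walk.cons hac.symm Walk.nil)).IsPath := by
    simp [hab.ne', hbc.ne, hac.ne.symm]
  exact hG _ ((Walk.cons_isCycle_iff _ hab).2 ⟨hp, by simp [hab.ne, hac.ne, hbc.ne]⟩)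

lemma SimpleGraph.IsAcyclic.eq_of_adj_of_adj_of_adj (hG : G.IsAcyclic) {a b c d b' c' : V}
    (hab : G.Adj a b) (hbc : G.Adj b c) (hcd : G.Adj c d)
    (hab' : G.Adj a b') (hbc' : G.Adj b' c') (hcd' : G.Adj c' d)
    (hac : a ≠ c) (hbd : b ≠ d) (hac' : a ≠ c') (hbd' : b' ≠ d) : b = b' := by
  have had : a ≠ d := by
    rintro rfl
    exact hG.not_adj_of_adj_of_adj hab hbc hcd.symm
  have hp : (Walk.cons hab (Walk.cons hbc (Walk.cons hcd Walk.nil))).IsPath := by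
    simp [hab.ne, hbc.ne, hcd.ne, hac, hbd, had]
  have hp' : (Walk.cons hab' (Walk.cons hbc' (Walk.cons hcd' Walk.nil))).IsPath := by
    simp [hab'.ne, hbc'.ne, hcd'.ne, hac', hbd', had]
  have hsnd := congrArg (fun p : G.Path a d => p.1.snd)
    ((hG.subsingleton_path a d).elim ⟨_, hp⟩ ⟨_, hp'⟩)
  simpa using hsnd

lemma SimpleGraph.IsAcyclic.exists_isVertexCover_of_isTotalDomSet (hG : G.IsAcyclic)
    {D : Finset V} (hD : IsTotalDomSet G D) : ∃ X : Finset V, _root_.IsVertexCover G X := by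
  classical
  set M : Set V := {v | v ∉ D ∧ ∃ y ∉ D, G.Adj v y}
  have hpath : ∀ v ∈ M, ∃ y d₁ d₂,
      y ∉ D ∧ G.Adj v y ∧ d₁ ∈ D ∧ G.Adj d₁ v ∧ d₂ ∈ D ∧ G.Adj y d₂ := by
    rintro v ⟨-, y, hy, hvy⟩
    obtain ⟨d₁, hd₁, hvd₁⟩ := hD v
    obtain ⟨d₂, hd₂, hyd₂⟩ := hD y
    exact ⟨y, d₁, d₂, hy, hvy, hd₁, hvd₁.symm, hd₂, hyd₂⟩
  choose! y d₁ d₂ hy hvy hd₁ hd₁v hd₂ hyd₂ using hpath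
  -- an edge outside `D` is the middle edge of the unique path between its two neighbours in `D`
  have hM : M.Finite := by
    refine Set.Finite.of_injOn (f := fun v => (d₁ v, d₂ v)) (t := ↑(D ×ˢ D))
      (fun v hv => by simp [hd₁ v hv, hd₂ v hv]) (fun v hv v' hv' h => ?_) (finite_toSet _)
    simp only [Prod.mk.injEq] at h
    have hne : ∀ v ∈ M, d₁ v ≠ y v ∧ v ≠ d₂ v := fun v hv =>
      ⟨fun h => hy v hv (h ▸ hd₁ v hv), fun h => hv.1 (h ▸ hd₂ v hv)⟩
    refine hG.eq_of_adj_of_adj_of_adj (hd₁v v hv) (hvy v hv) (hyd₂ v hv)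
      (h.1 ▸ hd₁v v' hv') (hvy v' hv') (h.2 ▸ hyd₂ v' hv') (hne v hv).1 (hne v hv).2 ?_ ?_
    · exact h.1 ▸ (hne v' hv').1
    · exact h.2 ▸ (hne v' hv').2
  refine ⟨D ∪ hM.toFinset, fun a b hab => ?_⟩
  by_cases ha : a ∈ D
  · exact Or.inl (mem_union_left _ ha)
  by_cases hb : b ∈ D
  · exact Or.inr (mem_union_left _ hb)
  exact Or.inl (mem_union_right _ (hM.mem_toFinset.2 ⟨ha, b, hb, hab⟩))

end Acyclic

section GraphSum
variable {V W : Type*} {G : SimpleGraph V} {H : SimpleGraph W} {u : V} {v₀ : W}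

@[simp]
lemma graphSum_adj_inl_inl {a b : V} : (graphSum G H u v₀).Adj (inl a) (inl b) ↔ G.Adj a b := by
  simpa [graphSum, G.adj_comm b a] using fun h => G.ne_of_adj h

@[simp]
lemma graphSum_adj_inr_inr {a b : W} : (graphSum G H u v₀).Adj (inr a) (inr b) ↔ H.Adj a b := by
  simpa [graphSum, H.adj_comm b a] using fun h => H.ne_of_adj h

@[simp]
lemma graphSum_adj_inl_inr {a : V} {b : W} :
    (graphSum G H u v₀).Adj (inl a) (inr b) ↔ a = u ∧ b = v₀ := by
  simp [graphSum]

@[simp]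
lemma graphSum_adj_inr_inl {a : V} {b : W} :
    (graphSum G H u v₀).Adj (inr b) (inl a) ↔ a = u ∧ b = v₀ := by
  rw [adj_comm, graphSum_adj_inl_inr]

lemma isTotalDomSet_disjSum {D : Finset V} {S : Finset W}
    (hD : ∀ a, (∃ d ∈ D, G.Adj a d) ∨ (a = u ∧ v₀ ∈ S))
    (hS : ∀ b, (∃ s ∈ S, H.Adj b s) ∨ (b = v₀ ∧ u ∈ D)) :
    IsTotalDomSet (graphSum G H u v₀) (D.disjSum S) := by
  rintro (a | b)
  · rcases hD a with ⟨d, hd, had⟩ | ⟨rfl, hv₀⟩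
    · exact ⟨inl d, inl_mem_disjSum.2 hd, graphSum_adj_inl_inl.2 had⟩
    · exact ⟨inr v₀, inr_mem_disjSum.2 hv₀, graphSum_adj_inl_inr.2 ⟨rfl, rfl⟩⟩
  · rcases hS b with ⟨s, hs, hbs⟩ | ⟨rfl, hu⟩
    · exact ⟨inr s, inr_mem_disjSum.2 hs, graphSum_adj_inr_inr.2 hbs⟩
    · exact ⟨inl u, inl_mem_disjSum.2 hu, graphSum_adj_inr_inl.2 ⟨rfl, rfl⟩⟩

lemma isVertexCover_disjSum {X : Finset V} {S : Finset W} (hX : _root_.IsVertexCover G X)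
    (hS : _root_.IsVertexCover H S) (hu : u ∈ X ∨ v₀ ∈ S) :
    _root_.IsVertexCover (graphSum G H u v₀) (X.disjSum S) := by
  rintro (a | b) (a' | b') h <;> simp only [graphSum_adj_inl_inl, graphSum_adj_inr_inr,
    graphSum_adj_inl_inr, graphSum_adj_inr_inl] at h <;>
    simp only [inl_mem_disjSum, inr_mem_disjSum]
  · exact hX h
  · obtain ⟨rfl, rfl⟩ := h; exact hu
  · obtain ⟨rfl, rfl⟩ := h; exact hu.symm
  · exact hS h

lemma isVertexCover_toLeft {X : Finset (V ⊕ W)}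
    (hX : _root_.IsVertexCover (graphSum G H u v₀) X) : _root_.IsVertexCover G X.toLeft :=
  fun _ _ h => by simpa only [mem_toLeft] using hX (graphSum_adj_inl_inl.2 h)

lemma isVertexCover_toRight {X : Finset (V ⊕ W)}
    (hX : _root_.IsVertexCover (graphSum G H u v₀) X) : _root_.IsVertexCover H X.toRight :=
  fun _ _ h => by simpa only [mem_toRight] using hX (graphSum_adj_inr_inr.2 h)

lemma tau_graphSum {X : Finset V} {S : Finset W} (hX : _root_.IsVertexCover G X)
    (hXc : #X = tau G) (hS : _root_.IsVertexCover H S)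
    (hSmin : ∀ S', _root_.IsVertexCover H S' → #S ≤ #S') (hu : u ∈ X ∨ v₀ ∈ S) :
    tau (graphSum G H u v₀) = tau G + #S := by
  have hcov := isVertexCover_disjSum hX hS hu
  refine le_antisymm ((tau_le_card hcov).trans_eq (by rw [card_disjSum, hXc]))
    (le_tau hcov fun X' hX' => ?_)
  rw [← card_toLeft_add_card_toRight]
  exact add_le_add (tau_le_card (isVertexCover_toLeft hX')) (hSmin _ (isVertexCover_toRight hX'))

variable {D : Finset (V ⊕ W)}

lemma exists_adj_toRight (hD : IsTotalDomSet (graphSum G H u v₀) D) {b : W} (hb : b ≠ v₀) :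
    ∃ s ∈ D.toRight, H.Adj b s := by
  obtain ⟨a | s, hs, h⟩ := hD (inr b)
  · exact absurd (graphSum_adj_inr_inl.1 h).2 hb
  · exact ⟨s, mem_toRight.2 hs, graphSum_adj_inr_inr.1 h⟩

lemma isTotalDomSet_toLeft (hD : IsTotalDomSet (graphSum G H u v₀) D)
    (hu : inr v₀ ∈ D → ∃ a ∈ D.toLeft, G.Adj u a) : IsTotalDomSet G D.toLeft := by
  intro a
  obtain ⟨d | b, hd, h⟩ := hD (inl a)
  · exact ⟨d, mem_toLeft.2 hd, graphSum_adj_inl_inl.1 h⟩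
  · obtain ⟨rfl, rfl⟩ := graphSum_adj_inl_inr.1 h
    exact hu hd

lemma isTotalDomSet_insert_toLeft [DecidableEq V] (hD : IsTotalDomSet (graphSum G H u v₀) D)
    {w : V} (hw : G.Adj u w) : IsTotalDomSet G (insert w D.toLeft) := by
  intro a
  obtain ⟨d | b, hd, h⟩ := hD (inl a)
  · exact ⟨d, mem_insert_of_mem (mem_toLeft.2 hd), graphSum_adj_inl_inl.1 h⟩
  · obtain ⟨rfl, rfl⟩ := graphSum_adj_inl_inr.1 h
    exact ⟨w, mem_insert_self _ _, hw⟩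

lemma gammaT_le_card_toLeft (hD : IsTotalDomSet (graphSum G H u v₀) D) (hv₀ : inr v₀ ∉ D) :
    gammaT G ≤ #D.toLeft :=
  gammaT_le_card (isTotalDomSet_toLeft hD fun h => absurd h hv₀)

lemma gammaT_le_card_toLeft_add_one (hD : IsTotalDomSet (graphSum G H u v₀) D) {w : V}
    (hw : G.Adj u w) : gammaT G ≤ #D.toLeft + 1 := by
  classical
  exact (gammaT_le_card (isTotalDomSet_insert_toLeft hD hw)).trans (card_insert_le _ _)

lemma quasiIsolated_of_isTotalDomSet_graphSum (hD : IsTotalDomSet (graphSum G H u v₀) D)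
    {w : V} (hw : G.Adj u w) (hu : ∀ a ∈ D.toLeft, ¬ G.Adj u a)
    (hcard : #D.toLeft + 1 = gammaT G) : QuasiIsolated G u := by
  classical
  have hw' : w ∉ D.toLeft := fun h => hu w h hw
  refine ⟨insert w D.toLeft, isTotalDomSet_insert_toLeft hD hw,
    by rw [card_insert_of_notMem hw', hcard], w, mem_insert_self _ _, ?_⟩
  ext x
  simp only [pn, Set.mem_ofPred_eq, Set.mem_singleton_iff, Set.ext_iff, Set.mem_inter_iff,
    mem_neighborSet, coe_insert, Set.mem_insert_iff, mem_coe]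
  constructor
  · intro hx
    -- a dominator of `x` taken from `D.toLeft` would have to be `w`, which is not in `D.toLeft`
    obtain ⟨d | b, hd, h⟩ := hD (inl x)
    · have hdw := (hx d).1 ⟨graphSum_adj_inl_inl.1 h, Or.inr (mem_toLeft.2 hd)⟩
      exact absurd (hdw ▸ mem_toLeft.2 hd) hw'
    · exact (graphSum_adj_inl_inr.1 h).1
  · rintro rfl y
    constructor
    · rintro ⟨h, rfl | hy⟩
      · rfl
      · exact absurd h (hu y hy)
    · rintro rfl
      exact ⟨hw, Or.inl rfl⟩

lemma gammaT_le_card_toLeft_of_not_quasiIsolated (hQI : ¬ QuasiIsolated G u)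
    (hD : IsTotalDomSet (graphSum G H u v₀) D) {w : V} (hw : G.Adj u w) :
    gammaT G ≤ #D.toLeft := by
  by_cases hu : ∃ a ∈ D.toLeft, G.Adj u a
  · exact gammaT_le_card (isTotalDomSet_toLeft hD fun _ => hu)
  simp only [not_exists, not_and] at hu
  have hle := gammaT_le_card_toLeft_add_one hD hw
  have hne : #D.toLeft + 1 ≠ gammaT G := fun h =>
    hQI (quasiIsolated_of_isTotalDomSet_graphSum hD hw hu h)
  omega

lemma preservesGtTau_graphSum_of_forall_not_isTotalDomSet (hG : ∀ v, ∃ w, G.Adj v w)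
    (hD : ∀ D, ¬ IsTotalDomSet G D) : PreservesGtTau G (graphSum G H u v₀) := by
  classical
  obtain ⟨w, hw⟩ := hG u
  have hX : ∀ X, ¬ _root_.IsVertexCover G X := fun X hX =>
    let ⟨D, hD'⟩ := exists_isTotalDomSet_of_isVertexCover hG hX; hD D hD'
  refine preservesGtTau_of_eq_add 0 ?_ ?_
  · rw [gammaT_eq_zero_of_forall_not hD, gammaT_eq_zero_of_forall_not
      fun D' hD' => hD _ (isTotalDomSet_insert_toLeft hD' hw)]
  · rw [tau_eq_zero_of_forall_not hX, tau_eq_zero_of_forall_not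
      fun X' hX' => hX _ (isVertexCover_toLeft hX')]

end GraphSum

section SmallGraphs

lemma pathGraph_four_exists_adj_one_or_two (b : Fin 4) :
    ∃ s ∈ ({1, 2} : Finset (Fin 4)), (pathGraph 4).Adj b s := by
  revert b; simp only [pathGraph_adj]; decide

lemma pathGraph_four_card_of_dominates_ne_zero {S : Finset (Fin 4)}
    (hS : ∀ b ≠ 0, ∃ s ∈ S, (pathGraph 4).Adj b s) : 2 ≤ #S ∧ (0 ∈ S → 3 ≤ #S) := by
  revert S; simp only [pathGraph_adj]; decide

lemma pathGraph_four_two_le_card_of_dominates_ne_one {S : Finset (Fin 4)}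
    (hS : ∀ b ≠ 1, ∃ s ∈ S, (pathGraph 4).Adj b s) : 2 ≤ #S := by
  revert S; simp only [pathGraph_adj]; decide

lemma pathGraph_four_isVertexCover_zero_two : _root_.IsVertexCover (pathGraph 4) {0, 2} := by
  simp only [_root_.IsVertexCover, pathGraph_adj]; decide

lemma pathGraph_four_isVertexCover_one_three : _root_.IsVertexCover (pathGraph 4) {1, 3} := by
  simp only [_root_.IsVertexCover, pathGraph_adj]; decide

lemma pathGraph_four_two_le_card_of_isVertexCover {S : Finset (Fin 4)}
    (hS : _root_.IsVertexCover (pathGraph 4) S) : 2 ≤ #S := by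
  revert S; simp only [_root_.IsVertexCover, pathGraph_adj]; decide

lemma pathGraph_two_isVertexCover_zero : _root_.IsVertexCover (pathGraph 2) {0} := by
  simp only [_root_.IsVertexCover, pathGraph_adj]; decide

lemma pathGraph_two_one_le_card_of_isVertexCover {S : Finset (Fin 2)}
    (hS : _root_.IsVertexCover (pathGraph 2) S) : 1 ≤ #S := by
  revert S; simp only [_root_.IsVertexCover, pathGraph_adj]; decide

end SmallGraphs

section Operations
variable {V : Type*} {T : SimpleGraph V} {D X : Finset V}

lemma preservesGtTau_graphSum_pathGraph_four_zero (hD : IsTotalDomSet T D)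
    (hX : _root_.IsVertexCover T X) (u : V) :
    PreservesGtTau T (graphSum T (pathGraph 4) u 0) := by
  obtain ⟨D, hD, hDc⟩ := exists_isTotalDomSet_card_eq_gammaT hD
  obtain ⟨X, hX, hXc⟩ := exists_isVertexCover_card_eq_tau hX
  obtain ⟨w, -, hw⟩ := hD u
  have hdom := isTotalDomSet_disjSum (H := pathGraph 4) (u := u) (v₀ := 0) (S := {1, 2})
    (fun a => Or.inl (hD a)) (fun b => Or.inl (pathGraph_four_exists_adj_one_or_two b))
  refine preservesGtTau_of_eq_add 2 (le_antisymm ?_ (le_gammaT hdom fun D' hD' => ?_)) ?_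
  · exact (gammaT_le_card hdom).trans_eq (by rw [card_disjSum, hDc]; rfl)
  · obtain ⟨h2, h3⟩ := pathGraph_four_card_of_dominates_ne_zero fun b hb =>
      exists_adj_toRight hD' hb
    rw [← card_toLeft_add_card_toRight]
    by_cases h0 : inr 0 ∈ D'
    · have := gammaT_le_card_toLeft_add_one hD' hw
      have := h3 (mem_toRight.2 h0)
      omega
    · have := gammaT_le_card_toLeft hD' h0
      omega
  · exact tau_graphSum hX hXc pathGraph_four_isVertexCover_zero_two
      (fun _ => pathGraph_four_two_le_card_of_isVertexCover) (Or.inr (by decide))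

lemma preservesGtTau_graphSum_bot_unit (hD : IsTotalDomSet T D) (hDc : #D = gammaT T)
    (hX : _root_.IsVertexCover T X) (hXc : #X = tau T) {u : V} (huD : u ∈ D) (huX : u ∈ X) :
    PreservesGtTau T (graphSum T (⊥ : SimpleGraph Unit) u ()) := by
  obtain ⟨w, -, hw⟩ := hD u
  have hdom := isTotalDomSet_disjSum (H := (⊥ : SimpleGraph Unit)) (v₀ := ()) (S := ∅)
    (fun a => Or.inl (hD a)) (fun _ => Or.inr ⟨rfl, huD⟩)
  refine preservesGtTau_of_eq_add 0 (le_antisymm ?_ (le_gammaT hdom fun D' hD' => ?_)) ?_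
  · exact (gammaT_le_card hdom).trans_eq (by rw [card_disjSum, hDc]; rfl)
  · rw [← card_toLeft_add_card_toRight]
    by_cases h0 : inr () ∈ D'
    · have := gammaT_le_card_toLeft_add_one hD' hw
      have := card_pos.2 ⟨(), mem_toRight.2 h0⟩
      omega
    · have := gammaT_le_card_toLeft hD' h0
      omega
  · exact tau_graphSum (S := ∅) hX hXc (fun _ _ h => absurd h (bot_adj _ _).1)
      (fun _ _ => Nat.zero_le _) (Or.inl huX)

lemma preservesGtTau_graphSum_pathGraph_two (hD : IsTotalDomSet T D) (hDc : #D = gammaT T)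
    (hX : _root_.IsVertexCover T X) {u : V} (huD : u ∈ D) (hQI : ¬ QuasiIsolated T u) :
    PreservesGtTau T (graphSum T (pathGraph 2) u 0) := by
  obtain ⟨X, hX, hXc⟩ := exists_isVertexCover_card_eq_tau hX
  obtain ⟨w, -, hw⟩ := hD u
  have hdom := isTotalDomSet_disjSum (H := pathGraph 2) (v₀ := 0) (S := {0})
    (fun a => Or.inl (hD a)) fun b => by
      fin_cases b
      · exact Or.inr ⟨rfl, huD⟩
      · exact Or.inl ⟨0, mem_singleton_self 0, pathGraph_adj.2 (by decide)⟩
  refine preservesGtTau_of_eq_add 1 (le_antisymm ?_ (le_gammaT hdom fun D' hD' => ?_)) ?_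
  · exact (gammaT_le_card hdom).trans_eq (by rw [card_disjSum, hDc]; rfl)
  · obtain ⟨s, hs, -⟩ := exists_adj_toRight hD' (b := 1) (by decide)
    have := card_pos.2 ⟨s, hs⟩
    have := gammaT_le_card_toLeft_of_not_quasiIsolated hQI hD' hw
    rw [← card_toLeft_add_card_toRight]
    omega
  · exact tau_graphSum hX hXc pathGraph_two_isVertexCover_zero
      (fun _ => pathGraph_two_one_le_card_of_isVertexCover) (Or.inr (mem_singleton_self 0))

lemma preservesGtTau_graphSum_pathGraph_four_one (hD : IsTotalDomSet T D)
    (hX : _root_.IsVertexCover T X) {u : V} (hQI : ¬ QuasiIsolated T u) :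
    PreservesGtTau T (graphSum T (pathGraph 4) u 1) := by
  obtain ⟨D, hD, hDc⟩ := exists_isTotalDomSet_card_eq_gammaT hD
  obtain ⟨X, hX, hXc⟩ := exists_isVertexCover_card_eq_tau hX
  obtain ⟨w, -, hw⟩ := hD u
  have hdom := isTotalDomSet_disjSum (H := pathGraph 4) (u := u) (v₀ := 1) (S := {1, 2})
    (fun a => Or.inl (hD a)) (fun b => Or.inl (pathGraph_four_exists_adj_one_or_two b))
  refine preservesGtTau_of_eq_add 2 (le_antisymm ?_ (le_gammaT hdom fun D' hD' => ?_)) ?_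
  · exact (gammaT_le_card hdom).trans_eq (by rw [card_disjSum, hDc]; rfl)
  · have := pathGraph_four_two_le_card_of_dominates_ne_one fun b hb => exists_adj_toRight hD' hb
    have := gammaT_le_card_toLeft_of_not_quasiIsolated hQI hD' hw
    rw [← card_toLeft_add_card_toRight]
    omega
  · exact tau_graphSum hX hXc pathGraph_four_isVertexCover_one_three
      (fun _ => pathGraph_four_two_le_card_of_isVertexCover) (Or.inr (by decide))

lemma preservesGtTau_graphSum_pathGraph_four_one_of_subsingleton [Subsingleton V] (u : V) :
    PreservesGtTau T (graphSum T (pathGraph 4) u 1) := by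
  have hX : _root_.IsVertexCover T ∅ := fun a b h => absurd (Subsingleton.elim a b) h.ne
  have hdom := isTotalDomSet_disjSum (G := T) (H := pathGraph 4) (u := u) (v₀ := 1)
    (D := ∅) (S := {1, 2})
    (fun a => Or.inr ⟨Subsingleton.elim a u, by decide⟩)
    (fun b => Or.inl (pathGraph_four_exists_adj_one_or_two b))
  have hγ : gammaT T = 0 := gammaT_eq_zero_of_forall_not fun D hD =>
    let ⟨d, _, h⟩ := hD u; h.ne (Subsingleton.elim u d)
  refine preservesGtTau_of_eq_add 2 (le_antisymm ?_ (le_gammaT hdom fun D' hD' => ?_)) ?_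
  · exact (gammaT_le_card hdom).trans_eq (by rw [card_disjSum, hγ]; rfl)
  · have := pathGraph_four_two_le_card_of_dominates_ne_one fun b hb => exists_adj_toRight hD' hb
    rw [hγ, ← card_toLeft_add_card_toRight]
    omega
  · exact tau_graphSum hX (le_antisymm (tau_le_card hX) (Nat.zero_le _)).symm
      pathGraph_four_isVertexCover_one_three
      (fun _ => pathGraph_four_two_le_card_of_isVertexCover) (Or.inr (by decide))

lemma preservesGtTau_graphSum_pathGraph_four_one_of_isTree (hT : T.IsTree) {u : V}
    (hQI : ¬ QuasiIsolated T u) : PreservesGtTau T (graphSum T (pathGraph 4) u 1) := by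
  rcases subsingleton_or_nontrivial V with hV | hV
  · exact preservesGtTau_graphSum_pathGraph_four_one_of_subsingleton u
  by_cases hD : ∃ D, IsTotalDomSet T D
  · obtain ⟨D, hD⟩ := hD
    obtain ⟨X, hX⟩ := hT.isAcyclic.exists_isVertexCover_of_isTotalDomSet hD
    exact preservesGtTau_graphSum_pathGraph_four_one hD hX hQI
  · exact preservesGtTau_graphSum_of_forall_not_isTotalDomSet
      hT.connected.preconnected.exists_adj_of_nontrivial (not_exists.1 hD)

end Operations

/-- Each of the operations `O_1`–`O_4` preserves the difference `γ_t - τ`, and in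
particular preserves the equality `γ_t = τ`. -/
theorem stmt15 {V : Type*} (T : SimpleGraph V) (hT : T.IsTree) :
    (∀ u : V, (∃ D : Finset V, IsGttSet T D ∧ u ∈ D) →
      PreservesGtTau T (graphSum T (SimpleGraph.pathGraph 4) u 0)) ∧
    (∀ u : V, (∃ D : Finset V, IsGttSet T D ∧ u ∈ D) →
      PreservesGtTau T (graphSum T (⊥ : SimpleGraph Unit) u ())) ∧
    (∀ u : V, (∃ D : Finset V, IsGttSet T D ∧ u ∈ D) → ¬ QuasiIsolated T u →
      PreservesGtTau T (graphSum T (SimpleGraph.pathGraph 2) u 0)) ∧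
    (∀ u : V, ¬ QuasiIsolated T u →
      PreservesGtTau T (graphSum T (SimpleGraph.pathGraph 4) u 1)) := by
  refine ⟨?_, ?_, ?_, fun u => preservesGtTau_graphSum_pathGraph_four_one_of_isTree hT⟩
  · rintro u ⟨D, ⟨hdom, hcov, -, -⟩, -⟩
    exact preservesGtTau_graphSum_pathGraph_four_zero hdom hcov u
  · rintro u ⟨D, ⟨hdom, hcov, hγ, hτ⟩, hu⟩
    exact preservesGtTau_graphSum_bot_unit hdom hγ hcov hτ hu hu
  · rintro u ⟨D, ⟨hdom, hcov, hγ, -⟩, hu⟩ hQI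
    exact preservesGtTau_graphSum_pathGraph_two hdom hγ hcov hu hQI
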